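/- Let G be a finite simple graph, uv an edge with u ≠ v, and k ≥ 1. Let h_k(G) be the number of spanning subgraphs of G with exactly k connected components in which every vertex has degree 2 (2-factors with k components). Then h_k(G) = h_k(G − uv) + h_k(G / uv) − h_k(G − u) − h_k(G − v). -/

import Mathlib

/-- A finite multigraph with loops: vertices and edges are labeled by
naturals, and `φ` assigns to each edge label its unordered pair of
endpoints. -/
structure MG where
  V : Finset ℕ
  E : Finset ℕ
  φ : ℕ → Sym2 ℕ

namespace MG

noncomputable section
open scoped Classical
open Finset

/-- Well-formed: endpoints of edges lie in the vertex set. -/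
def WF (G : MG) : Prop := ∀ e ∈ G.E, ∀ x ∈ G.φ e, x ∈ G.V

/-- Simple: no loops and no parallel edges, and well-formed. -/
def Simple (G : MG) : Prop :=
  G.WF ∧ (∀ e ∈ G.E, ¬ (G.φ e).IsDiag) ∧
    ∀ e ∈ G.E, ∀ e' ∈ G.E, G.φ e = G.φ e' → e = e'

/-- Degree of a vertex (loops count twice). -/
def deg (G : MG) (v : ℕ) : ℕ :=
  ∑ e ∈ G.E, ((if v ∈ G.φ e then 1 else 0) + (if G.φ e = Sym2.diag v then 1 else 0))

/-- Adjacency by some edge. -/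
def Adj (G : MG) (x y : ℕ) : Prop := ∃ e ∈ G.E, G.φ e = s(x, y)

/-- Reachability. -/
def Reach (G : MG) : ℕ → ℕ → Prop := Relation.ReflTransGen G.Adj

/-- The connected component of `v` (as a set of vertices). -/
def comp (G : MG) (v : ℕ) : Finset ℕ := G.V.filter (fun w => G.Reach v w)

/-- Number of connected components. -/
def k (G : MG) : ℕ := (G.V.image G.comp).card

/-- The subgraph determined by a pair (vertex set, edge set). -/
def sub (G : MG) (p : Finset ℕ × Finset ℕ) : MG := ⟨p.1, p.2, G.φ⟩

/-- All subgraphs of `G`, encoded as (vertex set, edge set) pairs. -/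
def subPairs (G : MG) : Finset (Finset ℕ × Finset ℕ) :=
  (G.V.powerset ×ˢ G.E.powerset).filter (fun p => ∀ e ∈ p.2, ∀ x ∈ G.φ e, x ∈ p.1)

/-- Edge deletion. -/
def delE (G : MG) (e : ℕ) : MG := ⟨G.V, G.E.erase e, G.φ⟩

/-- Vertex deletion (with all incident edges). -/
def delV (G : MG) (u : ℕ) : MG :=
  ⟨G.V.erase u, G.E.filter (fun e => u ∉ G.φ e), G.φ⟩

/-- Contraction of the edge `e` with endpoints `u`, `v`: delete `e`,
merge `u` into `v`. -/
def contract (G : MG) (e u v : ℕ) : MG :=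
  ⟨G.V.erase u, G.E.erase e,
    fun e' => Sym2.map (fun x => if x = u then v else x) (G.φ e')⟩

/-- Disjoint union (sensible when the vertex and edge label sets are disjoint). -/
def disjUnion (G H : MG) : MG :=
  ⟨G.V ∪ H.V, G.E ∪ H.E, fun e => if e ∈ G.E then G.φ e else H.φ e⟩

/-- One vertex with `n` loops. -/
def K1 (n : ℕ) : MG := ⟨{0}, Finset.range n, fun _ => Sym2.diag 0⟩

/-- The empty graph. -/
def emp : MG := ⟨∅, ∅, fun _ => Sym2.diag 0⟩

/-- Number of Hamiltonian cycles: connected spanning subgraphs with all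
degrees 2. -/
def h (G : MG) : ℕ :=
  ((G.subPairs).filter (fun p =>
    p.1 = G.V ∧ (G.sub p).k = 1 ∧ ∀ v ∈ p.1, (G.sub p).deg v = 2)).card

/-- Number of 2-factors with exactly `k₀` components. -/
def hk (G : MG) (k₀ : ℕ) : ℕ :=
  ((G.subPairs).filter (fun p =>
    p.1 = G.V ∧ (G.sub p).k = k₀ ∧ ∀ v ∈ p.1, (G.sub p).deg v = 2)).card

/-- Number of subgraphs with `k₀` components and `l` edges in which every
vertex has degree 2. -/
def ckl (G : MG) (k₀ l : ℕ) : ℕ :=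
  ((G.subPairs).filter (fun p =>
    (G.sub p).k = k₀ ∧ p.2.card = l ∧ ∀ v ∈ p.1, (G.sub p).deg v = 2)).card

/-- Number of `j`-matchings: subgraphs with `2j` vertices, all of degree 1. -/
def m (G : MG) (j : ℕ) : ℕ :=
  ((G.subPairs).filter (fun p =>
    p.1.card = 2 * j ∧ ∀ v ∈ p.1, (G.sub p).deg v = 1)).card

/-- Isomorphism of multigraphs. -/
def Iso (G H : MG) : Prop :=
  ∃ f g : ℕ → ℕ, Set.BijOn f ↑G.V ↑H.V ∧ Set.BijOn g ↑G.E ↑H.E ∧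
    ∀ e ∈ G.E, H.φ (g e) = Sym2.map f (G.φ e)

end
end MG

/-!
A 2-factor of `G` either avoids `e = uv`, and is then a 2-factor of `G − e`, or passes through
`e`; so `h_k(G) = h_k(G − e) + t`, with `t` the number of 2-factors with `k` components through
`e`. In a 2-factor of `G / e` the merged vertex `v` has degree 2, and each of its two edges comes
from an edge of `G` at `u` or at `v`. If both come from `v` (resp. `u`), it is a 2-factor of
`G − u` (resp. of `G − v`, after renaming `v` back to `u`). Otherwise one comes from each, and
adding `e` gives a 2-factor of `G` through `e` with the same components, because contracting an
edge does not change the number of components. Hence `h_k(G / e) = h_k(G − u) + h_k(G − v) + t`.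
-/

namespace MG

noncomputable section
open scoped Classical
open Finset

section Components

variable {H H' : MG} {a b x y : ℕ}

theorem Adj.symm (h : H.Adj x y) : H.Adj y x :=
  let ⟨e, he, hxy⟩ := h
  ⟨e, he, hxy.trans Sym2.eq_swap⟩

theorem Reach.symm (h : H.Reach x y) : H.Reach y x :=
  have : Std.Symm H.Adj := ⟨fun _ _ => Adj.symm⟩
  symm_of (Relation.ReflTransGen H.Adj) h

theorem Reach.trans {z : ℕ} (h₁ : H.Reach x y) (h₂ : H.Reach y z) : H.Reach x z :=
  Relation.ReflTransGen.trans h₁ h₂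

theorem WF.mem_of_adj (hH : H.WF) (h : H.Adj x y) : x ∈ H.V ∧ y ∈ H.V :=
  let ⟨e, he, hxy⟩ := h
  ⟨hH e he x (hxy ▸ Sym2.mem_mk_left x y), hH e he y (hxy ▸ Sym2.mem_mk_right x y)⟩

theorem mem_comp_self (hx : x ∈ H.V) : x ∈ H.comp x :=
  mem_filter.2 ⟨hx, .refl⟩

theorem comp_eq_of_reach (h : H.Reach x y) : H.comp x = H.comp y :=
  filter_congr fun _ _ => ⟨h.symm.trans, h.trans⟩

theorem k_eq_of_reach_iff (g : ℕ → ℕ) (hV : H'.V = H.V.image g)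
    (hR : ∀ a ∈ H.V, ∀ b ∈ H.V, H'.Reach (g a) (g b) ↔ H.Reach a b) : H'.k = H.k := by
  have hcomp : Set.EqOn (H'.comp ∘ g) ((fun C => C.image g) ∘ H.comp) H.V := by
    intro a ha
    ext w
    simp only [Function.comp, comp, hV, mem_filter, mem_image]
    constructor
    · rintro ⟨⟨b, hb, rfl⟩, hr⟩
      exact ⟨b, ⟨hb, (hR a ha b hb).1 hr⟩, rfl⟩
    · rintro ⟨b, ⟨hb, hr⟩, rfl⟩
      exact ⟨⟨b, hb, rfl⟩, (hR a ha b hb).2 hr⟩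
  have hinj : Set.InjOn (fun C : Finset ℕ => C.image g) ↑(H.V.image H.comp) := by
    simp only [Set.InjOn, coe_image, Set.forall_mem_image]
    intro a ha b hb hab
    obtain ⟨c, hc, hca⟩ := mem_image.1 (hab ▸ mem_image_of_mem g (mem_comp_self ha))
    obtain ⟨hcV, hbc⟩ := mem_filter.1 hc
    exact comp_eq_of_reach ((hR b hb a ha).1 (hca ▸ (hR b hb c hcV).2 hbc)).symm
  rw [k, k, hV, image_image, image_congr hcomp, ← image_image, card_image_of_injOn hinj]

def map (H : MG) (f : ℕ → ℕ) : MG := ⟨H.V.image f, H.E, fun e => (H.φ e).map f⟩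

variable {f : ℕ → ℕ}

theorem Adj.map (h : H.Adj a b) : (H.map f).Adj (f a) (f b) :=
  let ⟨e, he, hab⟩ := h
  ⟨e, he, by simp only [MG.map, hab, Sym2.map_mk]⟩

theorem exists_adj_of_adj_map (h : (H.map f).Adj x y) :
    ∃ a b, H.Adj a b ∧ f a = x ∧ f b = y := by
  obtain ⟨e, he, hxy⟩ := h
  obtain ⟨a, b, hab⟩ := Sym2.exists.1 ⟨H.φ e, rfl⟩
  change (H.φ e).map f = s(x, y) at hxy
  rw [hab, Sym2.map_mk, Sym2.eq_iff] at hxy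
  rcases hxy with ⟨rfl, rfl⟩ | ⟨rfl, rfl⟩
  · exact ⟨a, b, ⟨e, he, hab⟩, rfl, rfl⟩
  · exact ⟨b, a, Adj.symm ⟨e, he, hab⟩, rfl, rfl⟩

theorem Reach.map (h : H.Reach a b) : (H.map f).Reach (f a) (f b) := by
  induction h with
  | refl => exact .refl
  | tail _ hcd ih => exact Relation.ReflTransGen.tail ih hcd.map

theorem reach_map_iff (hH : H.WF) (hf : ∀ a ∈ H.V, ∀ b ∈ H.V, f a = f b → H.Reach a b)
    (ha : a ∈ H.V) (hb : b ∈ H.V) : (H.map f).Reach (f a) (f b) ↔ H.Reach a b := by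
  refine ⟨fun h => ?_, Reach.map⟩
  have lift : ∀ y, (H.map f).Reach (f a) y → ∃ c ∈ H.V, f c = y ∧ H.Reach a c := by
    intro y hy
    induction hy with
    | refl => exact ⟨a, ha, rfl, .refl⟩
    | tail _ hyz ih =>
      obtain ⟨c, hc, rfl, hac⟩ := ih
      obtain ⟨c', d, hc'd, hcc', rfl⟩ := exists_adj_of_adj_map hyz
      obtain ⟨hc', hd⟩ := hH.mem_of_adj hc'd
      exact ⟨d, hd, rfl, (hac.trans (hf c hc c' hc' hcc'.symm)).tail hc'd⟩
  obtain ⟨c, hc, hcb, hac⟩ := lift _ h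
  exact hac.trans (hf c hc b hb hcb)

theorem k_map (hH : H.WF) (hf : ∀ a ∈ H.V, ∀ b ∈ H.V, f a = f b → H.Reach a b) :
    (H.map f).k = H.k :=
  k_eq_of_reach_iff f rfl fun _ ha _ hb => reach_map_iff hH hf ha hb

theorem reach_delE_iff {e : ℕ} (h : (H.φ e).IsDiag) : (H.delE e).Reach x y ↔ H.Reach x y := by
  refine ⟨Relation.ReflTransGen.mono
    (fun _ _ ⟨e', he', hab⟩ => ⟨e', mem_of_mem_erase he', hab⟩) _ _, fun hxy => ?_⟩
  induction hxy with
  | refl => exact .refl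
  | tail _ hyz ih =>
    obtain ⟨e', he', hyz⟩ := hyz
    by_cases hee : e' = e
    · rw [← hee, hyz, Sym2.mk_isDiag_iff] at h
      exact h ▸ ih
    · exact ih.tail ⟨e', mem_erase.2 ⟨hee, he'⟩, hyz⟩

theorem k_delE_of_isDiag {e : ℕ} (h : (H.φ e).IsDiag) : (H.delE e).k = H.k :=
  k_eq_of_reach_iff id image_id.symm fun _ _ _ _ => reach_delE_iff h

end Components

section TwoFactors

variable {H : MG} {f : ℕ → ℕ} {x y : ℕ}

def incidence (z : Sym2 ℕ) (x : ℕ) : ℕ :=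
  (if x ∈ z then 1 else 0) + (if z = Sym2.diag x then 1 else 0)

theorem deg_eq_sum_incidence : H.deg x = ∑ e ∈ H.E, incidence (H.φ e) x := rfl

theorem incidence_mk (a b x : ℕ) :
    incidence s(a, b) x = (if a = x then 1 else 0) + (if b = x then 1 else 0) := by
  by_cases ha : a = x <;> by_cases hb : b = x <;>
    simp [incidence, Sym2.diag, ha, hb, eq_comm]

theorem incidence_eq_zero_iff {z : Sym2 ℕ} : incidence z x = 0 ↔ x ∉ z := by
  induction z using Sym2.inductionOn with
  | hf a b => rw [incidence_mk, Sym2.mem_iff]; split_ifs <;> grind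

theorem incidence_map {W : Finset ℕ} {z : Sym2 ℕ} (hz : ∀ x ∈ z, x ∈ W) (y : ℕ) :
    incidence (z.map f) y = ∑ x ∈ W with f x = y, incidence z x := by
  induction z using Sym2.inductionOn with
  | hf a b =>
    simp only [Sym2.map_mk, incidence_mk, sum_add_distrib, sum_ite_eq, mem_filter,
      hz a (Sym2.mem_mk_left a b), hz b (Sym2.mem_mk_right a b), true_and]

theorem deg_eq_zero_iff : H.deg x = 0 ↔ ∀ e ∈ H.E, x ∉ H.φ e := by
  simp only [deg_eq_sum_incidence, sum_eq_zero_iff, incidence_eq_zero_iff]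

theorem deg_map (hH : H.WF) (y : ℕ) : (H.map f).deg y = ∑ x ∈ H.V with f x = y, H.deg x := by
  simp only [deg_eq_sum_incidence]
  rw [sum_comm]
  exact sum_congr rfl fun e he => incidence_map (hH e he) y

theorem deg_map_of_injOn (hH : H.WF) (hf : Set.InjOn f H.V) (hx : x ∈ H.V) :
    (H.map f).deg (f x) = H.deg x := by
  have hfiber : {a ∈ H.V | f a = f x} = {x} := by
    ext a
    simp only [mem_filter, mem_singleton]
    exact ⟨fun ⟨ha, hax⟩ => hf ha hx hax, by rintro rfl; exact ⟨hx, rfl⟩⟩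
  rw [deg_map hH, hfiber, sum_singleton]

def TwoRegular (H : MG) : Prop := ∀ x ∈ H.V, H.deg x = 2

def IsTwoFactor (H : MG) (n : ℕ) : Prop := H.k = n ∧ H.TwoRegular

theorem isTwoFactor_map_iff_of_injOn (hH : H.WF) (hf : Set.InjOn f H.V) {n : ℕ} :
    (H.map f).IsTwoFactor n ↔ H.IsTwoFactor n := by
  have hk : (H.map f).k = H.k := k_map hH fun a ha b hb hab => hf ha hb hab ▸ .refl
  have hreg : (H.map f).TwoRegular ↔ H.TwoRegular := by
    change (∀ y ∈ H.V.image f, _) ↔ _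
    rw [forall_mem_image]
    exact forall₂_congr fun x hx => by rw [deg_map_of_injOn hH hf hx]
  rw [IsTwoFactor, IsTwoFactor, hk, hreg]

def spanningSub (H : MG) (S : Finset ℕ) : MG := H.sub (H.V, S)

def twoFactors (H : MG) (n : ℕ) : Finset (Finset ℕ) :=
  {S ∈ H.E.powerset | (H.spanningSub S).IsTwoFactor n}

theorem mem_twoFactors {n : ℕ} {S : Finset ℕ} :
    S ∈ H.twoFactors n ↔ S ⊆ H.E ∧ (H.spanningSub S).IsTwoFactor n := by
  rw [twoFactors, mem_filter, mem_powerset]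

theorem hk_eq_card_twoFactors (hH : H.WF) (n : ℕ) : H.hk n = #(H.twoFactors n) := by
  rw [← card_image_of_injective _ (Prod.mk_right_injective H.V), hk]
  congr 1
  ext ⟨W, S⟩
  simp only [subPairs, mem_twoFactors, spanningSub, IsTwoFactor, TwoRegular, mem_filter,
    mem_image, mem_product, mem_powerset, Prod.mk.injEq]
  constructor
  · rintro ⟨⟨⟨-, hS⟩, -⟩, rfl, hk, hdeg⟩
    exact ⟨S, ⟨hS, hk, hdeg⟩, rfl, rfl⟩
  · rintro ⟨S, ⟨hS, hk, hdeg⟩, rfl, rfl⟩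
    exact ⟨⟨⟨subset_refl _, hS⟩, fun e he => hH e (hS he)⟩, rfl, hk, hdeg⟩

theorem WF.delE (hH : H.WF) (e : ℕ) : (H.delE e).WF :=
  fun e' he' => hH e' (mem_of_mem_erase he')

theorem WF.delV (hH : H.WF) (u : ℕ) : (H.delV u).WF := by
  intro e he x hx
  obtain ⟨he, hue⟩ := mem_filter.1 he
  exact mem_erase.2 ⟨fun h => hue (h ▸ hx), hH e he x hx⟩

theorem WF.spanningSub (hH : H.WF) {S : Finset ℕ} (hS : S ⊆ H.E) : (H.spanningSub S).WF :=
  fun e he => hH e (hS he)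

theorem twoFactors_delE (e n : ℕ) :
    (H.delE e).twoFactors n = {S ∈ H.twoFactors n | e ∉ S} := by
  ext S
  rw [mem_filter, mem_twoFactors, mem_twoFactors, delE, subset_erase, and_right_comm]
  rfl

theorem card_twoFactors_eq_delE_add (e n : ℕ) :
    #(H.twoFactors n) = #((H.delE e).twoFactors n) + #{S ∈ H.twoFactors n | e ∈ S} := by
  rw [twoFactors_delE, add_comm, card_filter_add_card_filter_not]

end TwoFactors

def merge (u v x : ℕ) : ℕ := if x = u then v else x

section Merge

variable {H : MG} {u v a b : ℕ}

theorem merge_self : merge u v u = v := if_pos rfl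

theorem merge_of_ne (ha : a ≠ u) : merge u v a = a := if_neg ha

theorem merge_ne (huv : u ≠ v) (a : ℕ) : merge u v a ≠ u := by
  unfold merge
  split_ifs with ha
  exacts [huv.symm, ha]

theorem eq_or_mk_eq_of_merge_eq (h : merge u v a = merge u v b) :
    a = b ∨ s(a, b) = s(u, v) := by
  unfold merge at h
  split_ifs at h with ha hb hb <;> subst_vars <;> simp [Sym2.eq_swap]

theorem image_merge_of_notMem {W : Finset ℕ} (hu : u ∉ W) : W.image (merge u v) = W := by
  conv_rhs => rw [← image_id (s := W)]
  exact image_congr fun a ha => merge_of_ne (ne_of_mem_of_not_mem ha hu)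

theorem image_merge_of_mem {W : Finset ℕ} (hu : u ∈ W) :
    W.image (merge u v) = insert v (W.erase u) := by
  nth_rewrite 1 [← insert_erase hu]
  rw [image_insert, merge_self, image_merge_of_notMem (notMem_erase u W)]

theorem injOn_merge {W : Finset ℕ} (h : u ∉ W ∨ v ∉ W) : Set.InjOn (merge u v) W := by
  intro a ha b hb hab
  rcases eq_or_mk_eq_of_merge_eq hab with hab | hab
  · exact hab
  · rcases Sym2.eq_iff.1 hab with ⟨rfl, rfl⟩ | ⟨rfl, rfl⟩ <;> simp_all

theorem deg_map_merge (hH : H.WF) (hu : u ∈ H.V) (hv : v ∈ H.V) (huv : u ≠ v) :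
    (H.map (merge u v)).deg v = H.deg u + H.deg v := by
  have hfiber : {a ∈ H.V | merge u v a = v} = {u, v} := by
    ext a
    rw [mem_filter, mem_insert, mem_singleton]
    by_cases ha : a = u
    · simp [ha, merge_self, hu]
    · rw [merge_of_ne ha]
      exact ⟨fun h => .inr h.2, fun h => ⟨h.resolve_left ha ▸ hv, h.resolve_left ha⟩⟩
  rw [deg_map hH, hfiber, sum_pair huv]

theorem deg_map_merge_of_ne (hH : H.WF) (ha : a ∈ H.V) (hau : a ≠ u) (hav : a ≠ v) :
    (H.map (merge u v)).deg a = H.deg a := by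
  have hfiber : {b ∈ H.V | merge u v b = a} = {a} := by
    ext b
    rw [mem_filter, mem_singleton]
    by_cases hb : b = u
    · simp [hb, merge_self, Ne.symm hau, Ne.symm hav]
    · rw [merge_of_ne hb]
      exact ⟨fun h => h.2, fun h => ⟨h ▸ ha, h⟩⟩
  rw [deg_map hH, hfiber, sum_singleton]

end Merge

section Contraction

variable {G : MG} {e u v : ℕ}

theorem contract_spanningSub_eq_map {W S : Finset ℕ} (hW : W.image (merge u v) = G.V.erase u) :
    (G.contract e u v).spanningSub S = (G.sub (W, S)).map (merge u v) := by
  simp only [spanningSub, sub, contract, MG.map, hW]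
  rfl

theorem WF.contract (hG : G.WF) (hv : v ∈ G.V) (huv : u ≠ v) : (G.contract e u v).WF := by
  intro e' he' x hx
  obtain ⟨a, ha, rfl⟩ := Sym2.mem_map.1 hx
  have haV := hG e' (mem_of_mem_erase he') a ha
  refine mem_erase.2 ⟨merge_ne huv a, ?_⟩
  show merge u v a ∈ G.V
  by_cases hau : a = u
  · rwa [hau, merge_self]
  · rwa [merge_of_ne hau]

theorem image_merge_eq_erase (hu : u ∈ G.V) (hv : v ∈ G.V) (huv : u ≠ v) :
    G.V.image (merge u v) = G.V.erase u := by
  rw [image_merge_of_mem hu, insert_eq_of_mem (mem_erase.2 ⟨huv.symm, hv⟩)]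

theorem deg_contract_spanningSub (hG : G.WF) (hu : u ∈ G.V) (hv : v ∈ G.V) (huv : u ≠ v)
    {S : Finset ℕ} (hS : S ⊆ G.E) :
    ((G.contract e u v).spanningSub S).deg v =
      (G.spanningSub S).deg u + (G.spanningSub S).deg v := by
  rw [contract_spanningSub_eq_map (image_merge_eq_erase hu hv huv)]
  exact deg_map_merge (hG.spanningSub hS) hu hv huv

theorem deg_contract_spanningSub_of_ne (hG : G.WF) (hu : u ∈ G.V) (hv : v ∈ G.V) (huv : u ≠ v)
    {S : Finset ℕ} (hS : S ⊆ G.E) {a : ℕ} (ha : a ∈ G.V) (hau : a ≠ u) (hav : a ≠ v) :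
    ((G.contract e u v).spanningSub S).deg a = (G.spanningSub S).deg a := by
  rw [contract_spanningSub_eq_map (image_merge_eq_erase hu hv huv)]
  exact deg_map_merge_of_ne (hG.spanningSub hS) ha hau hav

theorem filter_twoFactors_contract_deg_eq_zero (hG : G.WF) (hφ : G.φ e = s(u, v))
    (hu : u ∈ G.V) (hv : v ∈ G.V) (huv : u ≠ v) {x : ℕ} (hx : x = u ∨ x = v) (n : ℕ) :
    {S ∈ (G.contract e u v).twoFactors n | (G.spanningSub S).deg x = 0} =
      (G.delV x).twoFactors n := by
  have hxe : x ∈ G.φ e := by rcases hx with rfl | rfl <;> simp [hφ]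
  have hW : (G.delV x).V.image (merge u v) = G.V.erase u := by
    rcases hx with rfl | rfl
    · exact image_merge_of_notMem (notMem_erase _ _)
    · rw [delV, image_merge_of_mem (mem_erase.2 ⟨huv, hu⟩), erase_right_comm,
        insert_erase (mem_erase.2 ⟨huv.symm, hv⟩)]
  have hinj : Set.InjOn (merge u v) (G.delV x).V := by
    apply injOn_merge
    rcases hx with rfl | rfl <;> simp [delV]
  have hsub : ∀ S : Finset ℕ,
      S ⊆ (G.delV x).E ↔ S ⊆ G.E.erase e ∧ ∀ e' ∈ S, x ∉ G.φ e' := by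
    intro S
    simp only [delV, subset_iff, mem_filter, mem_erase]
    exact ⟨fun h => ⟨fun e' he' => ⟨fun hee => (h he').2 (hee ▸ hxe), (h he').1⟩,
      fun e' he' => (h he').2⟩, fun ⟨h, hx⟩ e' he' => ⟨(h he').2, hx e' he'⟩⟩
  ext S
  have hmap {S : Finset ℕ} (hS : S ⊆ (G.delV x).E) :=
    isTwoFactor_map_iff_of_injOn (n := n) ((hG.delV x).spanningSub hS) hinj
  rw [mem_filter, mem_twoFactors, mem_twoFactors, deg_eq_zero_iff, contract_spanningSub_eq_map hW]
  constructor
  · rintro ⟨⟨hS, hF⟩, hSx⟩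
    have hS' := (hsub S).2 ⟨hS, hSx⟩
    exact ⟨hS', (hmap hS').1 hF⟩
  · rintro ⟨hS', hF⟩
    obtain ⟨hS, hSx⟩ := (hsub S).1 hS'
    exact ⟨⟨hS, (hmap hS').2 hF⟩, hSx⟩

/-- `G / e` restricted to `S` is the image of `S + e` under `merge u v` with the loop `e`
removed. -/
theorem k_contract_spanningSub (hG : G.WF) (he : e ∈ G.E) (hφ : G.φ e = s(u, v))
    (hu : u ∈ G.V) (hv : v ∈ G.V) (huv : u ≠ v) {S : Finset ℕ} (hS : S ⊆ G.E.erase e) :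
    ((G.contract e u v).spanningSub S).k = (G.spanningSub (insert e S)).k := by
  set H := G.spanningSub (insert e S)
  have heS : e ∉ S := fun h => (mem_erase.1 (hS h)).1 rfl
  have hH : H.WF := hG.spanningSub (insert_subset he (hS.trans (erase_subset _ _)))
  have hC : (G.contract e u v).spanningSub S = (H.map (merge u v)).delE e := by
    simp only [spanningSub, sub, contract, delE, MG.map, H, erase_insert heS,
      image_merge_eq_erase hu hv huv]
    rfl
  have hloop : ((H.map (merge u v)).φ e).IsDiag := by
    change (Sym2.map (merge u v) (G.φ e)).IsDiag
    rw [hφ, Sym2.map_mk, merge_self, merge_of_ne huv.symm, Sym2.mk_isDiag_iff]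
  rw [hC, k_delE_of_isDiag hloop, k_map hH]
  intro a _ b _ hab
  rcases eq_or_mk_eq_of_merge_eq hab with rfl | hab
  · exact .refl
  · exact .single ⟨e, mem_insert_self e S, hφ.trans hab.symm⟩

theorem twoRegular_spanningSub_insert_iff (hG : G.WF) (hφ : G.φ e = s(u, v))
    (hu : u ∈ G.V) (hv : v ∈ G.V) (huv : u ≠ v) {S : Finset ℕ} (hS : S ⊆ G.E.erase e) :
    (G.spanningSub (insert e S)).TwoRegular ↔ ((G.contract e u v).spanningSub S).TwoRegular ∧
      (G.spanningSub S).deg u ≠ 0 ∧ (G.spanningSub S).deg v ≠ 0 := by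
  have heS : e ∉ S := fun h => (mem_erase.1 (hS h)).1 rfl
  have hSE : S ⊆ G.E := hS.trans (erase_subset _ _)
  have hins : ∀ x, (G.spanningSub (insert e S)).deg x =
      (G.spanningSub S).deg x + ((if u = x then 1 else 0) + (if v = x then 1 else 0)) := by
    intro x
    rw [deg_eq_sum_incidence, deg_eq_sum_incidence]
    change ∑ e' ∈ insert e S, incidence (G.φ e') x = ∑ e' ∈ S, incidence (G.φ e') x + _
    rw [sum_insert heS, add_comm, hφ, incidence_mk]
  have hCv := deg_contract_spanningSub (e := e) hG hu hv huv hSE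
  have hCa : ∀ a ∈ G.V, a ≠ u → a ≠ v →
      ((G.contract e u v).spanningSub S).deg a = (G.spanningSub S).deg a :=
    fun _ ha => deg_contract_spanningSub_of_ne hG hu hv huv hSE ha
  simp only [TwoRegular, hins]
  change (∀ x ∈ G.V, _) ↔ (∀ x ∈ G.V.erase u, _) ∧ _
  constructor
  · intro h
    have hdu := h u hu
    have hdv := h v hv
    simp only [↓reduceIte, if_neg huv, if_neg huv.symm] at hdu hdv
    refine ⟨fun a ha => ?_, by omega, by omega⟩
    obtain ⟨hau, haV⟩ := mem_erase.1 ha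
    by_cases hav : a = v
    · rw [hav, hCv]
      omega
    · simpa [hCa a haV hau hav, Ne.symm hau, Ne.symm hav] using h a haV
  · rintro ⟨h, hdu, hdv⟩ a ha
    have hsum := hCv ▸ h v (mem_erase.2 ⟨huv.symm, hv⟩)
    by_cases hau : a = u
    · simp only [hau, ↓reduceIte, if_neg huv.symm]
      omega
    by_cases hav : a = v
    · simp only [hav, ↓reduceIte, if_neg huv]
      omega
    simpa [hCa a ha hau hav, Ne.symm hau, Ne.symm hav] using h a (mem_erase.2 ⟨hau, ha⟩)

theorem isTwoFactor_spanningSub_insert_iff (hG : G.WF) (he : e ∈ G.E) (hφ : G.φ e = s(u, v))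
    (hu : u ∈ G.V) (hv : v ∈ G.V) (huv : u ≠ v) {S : Finset ℕ} (hS : S ⊆ G.E.erase e)
    {n : ℕ} :
    (G.spanningSub (insert e S)).IsTwoFactor n ↔
      ((G.contract e u v).spanningSub S).IsTwoFactor n ∧
        (G.spanningSub S).deg u ≠ 0 ∧ (G.spanningSub S).deg v ≠ 0 := by
  rw [IsTwoFactor, IsTwoFactor, k_contract_spanningSub hG he hφ hu hv huv hS,
    twoRegular_spanningSub_insert_iff hG hφ hu hv huv hS, and_assoc]

theorem card_filter_twoFactors_mem (hG : G.WF) (he : e ∈ G.E) (hφ : G.φ e = s(u, v))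
    (hu : u ∈ G.V) (hv : v ∈ G.V) (huv : u ≠ v) (n : ℕ) :
    #{S ∈ G.twoFactors n | e ∈ S} = #{S ∈ (G.contract e u v).twoFactors n |
      (G.spanningSub S).deg u ≠ 0 ∧ (G.spanningSub S).deg v ≠ 0} := by
  have heS : ∀ {S}, S ∈ (G.contract e u v).twoFactors n → e ∉ S :=
    fun hS heS => (mem_erase.1 ((mem_twoFactors.1 hS).1 heS)).1 rfl
  refine card_nbij' (·.erase e) (insert e) (fun T hT => ?_) (fun S hS => ?_)
    (fun T hT => insert_erase (mem_filter.1 hT).2)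
    (fun S hS => erase_insert (heS (mem_filter.1 hS).1))
  · obtain ⟨hT, heT⟩ := mem_filter.1 hT
    obtain ⟨hTE, hF⟩ := mem_twoFactors.1 hT
    have hS : T.erase e ⊆ G.E.erase e := erase_subset_erase e hTE
    rw [← insert_erase heT, isTwoFactor_spanningSub_insert_iff hG he hφ hu hv huv hS] at hF
    exact mem_filter.2 ⟨mem_twoFactors.2 ⟨hS, hF.1⟩, hF.2⟩
  · obtain ⟨hS, hdeg⟩ := mem_filter.1 hS
    obtain ⟨hSE, hF⟩ := mem_twoFactors.1 hS
    have hF' := (isTwoFactor_spanningSub_insert_iff hG he hφ hu hv huv hSE).2 ⟨hF, hdeg⟩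
    have hSE' : insert e S ⊆ G.E := insert_subset he (hSE.trans (erase_subset _ _))
    exact mem_filter.2 ⟨mem_twoFactors.2 ⟨hSE', hF'⟩, mem_insert_self e S⟩

theorem card_twoFactors_contract (hG : G.WF) (he : e ∈ G.E) (hφ : G.φ e = s(u, v))
    (huv : u ≠ v) (n : ℕ) :
    #((G.contract e u v).twoFactors n) =
      #((G.delV u).twoFactors n) + #((G.delV v).twoFactors n) +
        #{S ∈ G.twoFactors n | e ∈ S} := by
  obtain ⟨hu, hv⟩ := hG.mem_of_adj ⟨e, he, hφ⟩
  set T := (G.contract e u v).twoFactors n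
  have hdisj : Disjoint {S ∈ T | (G.spanningSub S).deg u = 0}
      {S ∈ T | (G.spanningSub S).deg v = 0} := by
    refine disjoint_filter.2 fun S hS hSu hSv => ?_
    obtain ⟨hSE, -, hreg⟩ := mem_twoFactors.1 hS
    have h2 := hreg v (mem_erase.2 ⟨huv.symm, hv⟩)
    rw [deg_contract_spanningSub hG hu hv huv (hSE.trans (erase_subset _ _)), hSu, hSv] at h2
    omega
  rw [← card_filter_add_card_filter_not
      (fun S => (G.spanningSub S).deg u = 0 ∨ (G.spanningSub S).deg v = 0),
    filter_or, card_union_of_disjoint hdisj,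
    filter_twoFactors_contract_deg_eq_zero hG hφ hu hv huv (.inl rfl),
    filter_twoFactors_contract_deg_eq_zero hG hφ hu hv huv (.inr rfl),
    card_filter_twoFactors_mem hG he hφ hu hv huv]
  simp only [not_or, ne_eq, T]

end Contraction

end
end MG

open MG in
theorem twoFactor_deletion_contraction_general (G : MG) (hG : G.Simple)
    (e u v : ℕ) (he : e ∈ G.E) (hφ : G.φ e = s(u, v)) (huv : u ≠ v)
    (k : ℕ) :
    (G.hk k : ℤ) = (G.delE e).hk k + (G.contract e u v).hk k
      - (G.delV u).hk k - (G.delV v).hk k := by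
  have hWF : G.WF := hG.1
  have hv : v ∈ G.V := (hWF.mem_of_adj ⟨e, he, hφ⟩).2
  have hdel := card_twoFactors_eq_delE_add (H := G) e k
  have hcon := card_twoFactors_contract hWF he hφ huv k
  rw [hk_eq_card_twoFactors hWF, hk_eq_card_twoFactors (hWF.delE e),
    hk_eq_card_twoFactors (hWF.contract hv huv), hk_eq_card_twoFactors (hWF.delV u),
    hk_eq_card_twoFactors (hWF.delV v)]
  omega

open MG in
/-- Lemma 1(1): h_k(G) = h_k(G−uv) + h_k(G/uv) − h_k(G−u) − h_k(G−v)
for a simple graph, an edge with distinct endpoints, and k ≥ 1. -/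
theorem twoFactor_deletion_contraction (G : MG) (hG : G.Simple)
    (e u v : ℕ) (he : e ∈ G.E) (hφ : G.φ e = s(u, v)) (huv : u ≠ v)
    (k : ℕ) (hk1 : 1 ≤ k) :
    (G.hk k : ℤ) = (G.delE e).hk k + (G.contract e u v).hk k
      - (G.delV u).hk k - (G.delV v).hk k :=
  twoFactor_deletion_contraction_general G hG e u v he hφ huv k
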